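/- arXiv:1106.1857 — 5 statements merged into one kernel-verified Lean document; each statement's English description precedes it below -/
import Mathlib

section
/- Let L be a countably infinite set and l : L → ℝ a function with l(γ) ≥ l₀ for all γ ∈ L, for some constant l₀ > 0. Assume that N(T) := #{γ ∈ L : l(γ) ≤ T} is finite for every T ∈ ℝ, and set h := limsup_{T→∞} (log N(T))/T; assume h < ∞. Then: (i) for every s ∈ ℂ with Re(s) > h, the double series Σ_{γ∈L} Σ_{k≥1} e^{−k·s·l(γ)}/k converges absolutely; and (ii) for every real s < h, the series Σ_{γ∈L} e^{−s·l(γ)} diverges. -/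
/-!
Grouping the geodesics into the shells `⌈l γ⌉ = n`, the `n`-th shell contributes at most
`N(n) e^{-σ(n-1)}` to `Σ_γ e^{-σ l(γ)}`; for `σ > a > h` eventually `N(n) ≤ e^{an}`, so the shells
are dominated by a geometric series. Since `l ≥ l₀ > 0`, the terms with `k ≥ 2` only add a
geometric factor `e^{-σ l₀ (k-1)}`. Conversely, if `Σ_γ e^{-s l(γ)} = C < ∞` with `s ≥ 0` then
`N(T) e^{-sT} ≤ C`, which forces `h ≤ s`; for `s ≤ 0` the terms do not even tend to zero.
-/

open Filter Real

section GrowthRate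

theorem zero_le_limsup_log_natCast_div (N : ℝ → ℕ) :
    0 ≤ limsup (fun T : ℝ => ((log (N T) / T : ℝ) : EReal)) atTop := by
  refine le_limsup_of_frequently_le (Eventually.frequently ?_)
  filter_upwards [eventually_ge_atTop 0] with T hT
  exact EReal.coe_nonneg.2 (div_nonneg (log_natCast_nonneg _) hT)

theorem eventually_le_exp_of_limsup_log_div_lt {f : ℝ → ℝ} {a : ℝ}
    (h : limsup (fun T : ℝ => ((log (f T) / T : ℝ) : EReal)) atTop < a) :
    ∀ᶠ T in atTop, f T ≤ exp (a * T) := by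
  filter_upwards [eventually_lt_of_limsup_lt h, eventually_gt_atTop 0] with T hlt hT
  rw [EReal.coe_lt_coe_iff, div_lt_iff₀ hT] at hlt
  exact (le_exp_log _).trans (exp_le_exp.2 hlt.le)

theorem limsup_log_div_le_of_le_mul_exp {f : ℝ → ℝ} {C s : ℝ} (hf : ∀ T, 0 ≤ f T) (hC : 1 ≤ C)
    (hs : 0 ≤ s) (hbound : ∀ T, f T ≤ C * exp (s * T)) :
    limsup (fun T : ℝ => ((log (f T) / T : ℝ) : EReal)) atTop ≤ s := by
  have hlog : ∀ T, 0 ≤ T → log (f T) ≤ log C + s * T := by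
    intro T hT
    rcases (hf T).eq_or_lt with hzero | hpos
    · rw [← hzero, log_zero]
      exact add_nonneg (log_nonneg hC) (mul_nonneg hs hT)
    · calc log (f T) ≤ log (C * exp (s * T)) := log_le_log hpos (hbound T)
        _ = log C + s * T := by rw [log_mul (by positivity) (exp_pos _).ne', log_exp]
  have hlim : Tendsto (fun T : ℝ => ((log C / T + s : ℝ) : EReal)) atTop (nhds (s : EReal)) := by
    rw [EReal.tendsto_coe]
    simpa using (tendsto_const_nhds.div_atTop tendsto_id).add_const s
  rw [← hlim.limsup_eq]
  refine limsup_le_limsup ?_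
  filter_upwards [eventually_gt_atTop 0] with T hT
  rw [EReal.coe_le_coe_iff, div_add' _ _ _ hT.ne', div_le_div_iff_of_pos_right hT]
  exact hlog T hT.le

end GrowthRate

section LengthSpectrum

variable {L : Type*} {l : L → ℝ}

theorem summable_exp_neg_mul_of_eventually_card_le (hl : ∀ γ, 0 ≤ l γ)
    (hfin : ∀ T : ℝ, {γ | l γ ≤ T}.Finite) {a σ : ℝ} (hσ : 0 ≤ σ) (haσ : a < σ)
    (hN : ∀ᶠ T in atTop, (Nat.card {γ // l γ ≤ T} : ℝ) ≤ exp (a * T)) :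
    Summable fun γ => exp (-σ * l γ) := by
  have hshell_sub : ∀ n : ℕ, {γ | ⌈l γ⌉₊ = n} ⊆ {γ | l γ ≤ n} :=
    fun n γ hγ => hγ ▸ Nat.le_ceil (l γ)
  have hshell : ∀ n : ℕ, ∑' γ : {γ | ⌈l γ⌉₊ = n}, exp (-σ * l γ)
      ≤ Nat.card {γ // l γ ≤ n} * exp (σ - σ * n) := by
    intro n
    have := ((hfin n).subset (hshell_sub n)).to_subtype
    calc ∑' γ : {γ | ⌈l γ⌉₊ = n}, exp (-σ * l γ)
        ≤ ∑' _ : {γ | ⌈l γ⌉₊ = n}, exp (σ - σ * n) := by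
          refine Summable.tsum_le_tsum (fun γ => exp_le_exp.2 ?_) .of_finite .of_finite
          have : (⌈l γ⌉₊ : ℝ) < l γ + 1 := Nat.ceil_lt_add_one (hl γ)
          rw [γ.2] at this
          nlinarith
      _ ≤ Nat.card {γ // l γ ≤ n} * exp (σ - σ * n) := by
          rw [tsum_const, nsmul_eq_mul]
          gcongr
          exact_mod_cast Nat.card_mono (hfin n) (hshell_sub n)
  rw [summable_partition (fun γ => (exp_pos _).le) (s := fun n : ℕ => {γ | ⌈l γ⌉₊ = n})
    fun γ => ⟨_, rfl, fun _ h => h.symm⟩]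
  refine ⟨fun n => have := ((hfin n).subset (hshell_sub n)).to_subtype; .of_finite, ?_⟩
  have hgeo : Summable fun n : ℕ => exp σ * exp (a - σ) ^ n :=
    (summable_geometric_of_lt_one (exp_pos _).le (exp_lt_one_iff.2 (by linarith))).mul_left _
  refine hgeo.of_norm_bounded_eventually_nat ?_
  filter_upwards [tendsto_natCast_atTop_atTop.eventually hN] with n hn
  rw [norm_of_nonneg (tsum_nonneg fun _ => (exp_pos _).le)]
  calc _ ≤ Nat.card {γ // l γ ≤ n} * exp (σ - σ * n) := hshell n
    _ ≤ exp (a * n) * exp (σ - σ * n) := by gcongr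
    _ = exp σ * exp (a - σ) ^ n := by rw [← exp_nat_mul, ← exp_add, ← exp_add]; ring_nf

theorem summable_norm_exp_div_of_summable {l₀ : ℝ} (hl₀ : 0 < l₀) (hl : ∀ γ, l₀ ≤ l γ) {s : ℂ}
    (hs : 0 < s.re) (hsum : Summable fun γ => exp (-s.re * l γ)) :
    Summable fun p : L × ℕ =>
      ‖Complex.exp (-((p.2 : ℂ) + 1) * s * (l p.1 : ℂ)) / ((p.2 : ℂ) + 1)‖ := by
  have hgeo : Summable fun k : ℕ => exp (-s.re * l₀) ^ k :=
    summable_geometric_of_lt_one (exp_pos _).le (exp_lt_one_iff.2 (by nlinarith))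
  refine (hsum.mul_of_nonneg hgeo (fun _ => (exp_pos _).le) fun _ => by positivity).of_nonneg_of_le
    (fun _ => norm_nonneg _) fun ⟨γ, k⟩ => ?_
  have hnorm : ‖Complex.exp (-((k : ℂ) + 1) * s * (l γ : ℂ)) / ((k : ℂ) + 1)‖
      = exp (-((k : ℝ) + 1) * s.re * l γ) / ((k : ℝ) + 1) := by
    rw [norm_div, Complex.norm_exp]
    norm_cast
    simp [Complex.mul_re]
  rw [hnorm]
  calc exp (-((k : ℝ) + 1) * s.re * l γ) / ((k : ℝ) + 1)
      ≤ exp (-((k : ℝ) + 1) * s.re * l γ) := div_le_self (exp_pos _).le (by simp)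
    _ ≤ exp (-s.re * l γ) * exp (-s.re * l₀) ^ k := by
      rw [← exp_nat_mul, ← exp_add]
      gcongr
      nlinarith [mul_le_mul_of_nonneg_left (hl γ) (mul_nonneg k.cast_nonneg hs.le)]

theorem natCard_le_tsum_mul_exp {s : ℝ} (hs : 0 ≤ s) (hsum : Summable fun γ => exp (-s * l γ))
    (T : ℝ) : (Nat.card {γ // l γ ≤ T} : ℝ) ≤ (∑' γ, exp (-s * l γ)) * exp (s * T) := by
  rcases finite_or_infinite {γ // l γ ≤ T} with hfinite | hinfinite
  · rw [← div_le_iff₀ (exp_pos _), div_eq_mul_inv, ← exp_neg, ← neg_mul]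
    calc (Nat.card {γ // l γ ≤ T} : ℝ) * exp (-s * T)
        = ∑' _ : {γ // l γ ≤ T}, exp (-s * T) := by rw [tsum_const, nsmul_eq_mul]
      _ ≤ ∑' γ : {γ | l γ ≤ T}, exp (-s * l γ) :=
          Summable.tsum_le_tsum (fun γ => exp_le_exp.2 (by nlinarith [γ.2])) .of_finite .of_finite
      _ ≤ ∑' γ, exp (-s * l γ) := hsum.tsum_subtype_le _ _ fun _ => (exp_pos _).le
  · rw [Nat.card_eq_zero_of_infinite, Nat.cast_zero]
    exact mul_nonneg (tsum_nonneg fun _ => (exp_pos _).le) (exp_pos _).le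

theorem limsup_log_card_div_le_of_summable {s : ℝ} (hs : 0 ≤ s)
    (hsum : Summable fun γ => exp (-s * l γ)) :
    limsup (fun T : ℝ => ((log (Nat.card {γ // l γ ≤ T}) / T : ℝ) : EReal)) atTop ≤ s := by
  have hC : 0 ≤ ∑' γ, exp (-s * l γ) := tsum_nonneg fun _ => (exp_pos _).le
  refine limsup_log_div_le_of_le_mul_exp (fun _ => Nat.cast_nonneg _) (le_add_of_nonneg_right hC)
    hs fun T => (natCard_le_tsum_mul_exp hs hsum T).trans ?_
  gcongr
  linarith

theorem not_summable_exp_neg_mul_of_nonpos [Infinite L] (hl : ∀ γ, 0 ≤ l γ) {s : ℝ} (hs : s ≤ 0) :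
    ¬Summable fun γ => exp (-s * l γ) := fun hsum => by
  obtain ⟨γ, hγ⟩ := (hsum.tendsto_cofinite_zero.eventually_lt_const one_pos).exists
  exact hγ.not_ge (one_le_exp (by nlinarith [hl γ]))

end LengthSpectrum

theorem zeta_abscissa_of_convergence_general
    {L : Type*} [Infinite L] (l : L → ℝ) (l₀ : ℝ) (hl₀ : 0 < l₀)
    (hl : ∀ γ, l₀ ≤ l γ)
    (hfin : ∀ T : ℝ, {γ : L | l γ ≤ T}.Finite)
    (h : ℝ)
    (hh : Filter.limsup
        (fun T : ℝ =>
          ((Real.log (Nat.card {γ : L // l γ ≤ T}) / T : ℝ) : EReal))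
        Filter.atTop = (h : EReal)) :
    (∀ s : ℂ, h < s.re →
      Summable (fun p : L × ℕ =>
        ‖Complex.exp (-((p.2 : ℂ) + 1) * s * (l p.1 : ℂ)) / ((p.2 : ℂ) + 1)‖)) ∧
    (∀ s : ℝ, s < h → ¬ Summable (fun γ : L => Real.exp (-s * l γ))) := by
  have hl_nonneg : ∀ γ, 0 ≤ l γ := fun γ => hl₀.le.trans (hl γ)
  have h_nonneg : 0 ≤ h := by
    simpa [hh] using zero_le_limsup_log_natCast_div fun T => Nat.card {γ : L // l γ ≤ T}
  refine ⟨fun s hs => ?_, fun s hs hsum => ?_⟩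
  · obtain ⟨a, hha, has⟩ := exists_between hs
    have hN := eventually_le_exp_of_limsup_log_div_lt (hh ▸ EReal.coe_lt_coe_iff.2 hha)
    exact summable_norm_exp_div_of_summable hl₀ hl (h_nonneg.trans_lt hs)
      (summable_exp_neg_mul_of_eventually_card_le hl_nonneg hfin (by linarith) has hN)
  · rcases le_or_gt s 0 with hs_nonpos | hs_pos
    · exact not_summable_exp_neg_mul_of_nonpos hl_nonneg hs_nonpos hsum
    · have hle := limsup_log_card_div_le_of_summable hs_pos.le hsum
      rw [hh, EReal.coe_le_coe_iff] at hle
      linarith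

/-- Abscissa of convergence of the (unweighted) dynamical zeta function.
`L` is the (countably infinite) set of primitive closed geodesics with length
function `l`, bounded below by `l₀ > 0`.  The counting function
`N(T) = #{γ : l γ ≤ T}` is finite for all `T`, and
`h = limsup_{T→∞} log N(T) / T` (a finite real number, stated via `EReal`).
Then the double series defining the zeta function converges absolutely for
`Re s > h`, and `Σ_γ e^{-s l(γ)}` diverges for real `s < h`. -/
theorem zeta_abscissa_of_convergence
    {L : Type*} [Countable L] [Infinite L] (l : L → ℝ) (l₀ : ℝ) (hl₀ : 0 < l₀)
    (hl : ∀ γ, l₀ ≤ l γ)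
    (hfin : ∀ T : ℝ, {γ : L | l γ ≤ T}.Finite)
    (h : ℝ)
    (hh : Filter.limsup
        (fun T : ℝ =>
          ((Real.log (Nat.card {γ : L // l γ ≤ T}) / T : ℝ) : EReal))
        Filter.atTop = (h : EReal)) :
    (∀ s : ℂ, h < s.re →
      Summable (fun p : L × ℕ =>
        ‖Complex.exp (-((p.2 : ℂ) + 1) * s * (l p.1 : ℂ)) / ((p.2 : ℂ) + 1)‖)) ∧
    (∀ s : ℝ, s < h → ¬ Summable (fun γ : L => Real.exp (-s * l γ))) :=
  zeta_abscissa_of_convergence_general l l₀ hl₀ hl hfin h hh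
end

section
/- Let L be a countable set, l : L → ℝ a function with l(γ) ≥ l₀ for all γ ∈ L for some constant l₀ > 0, w : L → [0,∞) a weight, and η > 0. Assume that for every T ∈ ℝ the sum θ(T) := Σ_{γ ∈ L with l(γ) ≤ T} l(γ)·w(γ) is finite, and that e^{−ηT}·θ(T) → 1/η as T → ∞. Then Σ_{γ ∈ L with l(γ) ≤ T} w(γ) ∼ e^{ηT}/(ηT) as T → ∞, i.e. the ratio of the two sides tends to 1. -/
/-!
Write `θ(T) = ∑_{l γ ≤ T} l γ w γ` and `N(T) = ∑_{l γ ≤ T} w γ`. Since lengths up to `T` are at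
most `T`, `θ(T) - θ(αT) ≤ T N(T)`; since lengths above `αT` exceed `αT`,
`N(T) ≤ N(αT) + θ(T) / (αT)`, and `N(αT) ≤ θ(αT) / l₀ = O(e^{αηT})` is negligible against
`e^{ηT} / T` for `α < 1`. Normalising by `e^{ηT} / (ηT)`, the lower bound tends to `1` and the upper
bound to `1 / α`, and `α` can be taken arbitrarily close to `1`.
-/

open Filter Real Topology

section Asymptotics

variable {θ N : ℝ → ℝ} {η α : ℝ}

theorem tendsto_rpow_mul_exp_neg_mul_mul_comp_mul_nhds_zero (hη : 0 < η)
    (hθ : Tendsto (fun T => exp (-η * T) * θ T) atTop (𝓝 (1 / η)))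
    (hα₀ : 0 < α) (hα₁ : α < 1) (s : ℝ) :
    Tendsto (fun T => T ^ s * (exp (-η * T) * θ (α * T))) atTop (𝓝 0) := by
  have hdecay := tendsto_rpow_mul_exp_neg_mul_atTop_nhds_zero s (η * (1 - α))
    (mul_pos hη (sub_pos.mpr hα₁))
  have hrescaled := hθ.comp (tendsto_id.const_mul_atTop hα₀)
  simpa only [zero_mul] using (hdecay.mul hrescaled).congr fun T => by
    have hsplit : exp (-η * T) = exp (-(η * (1 - α)) * T) * exp (-η * (α * T)) := by
      rw [← exp_add]; ring_nf
    simp only [Function.comp_apply, id, hsplit]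
    ring

theorem eventually_lt_mul_exp_neg_mul_mul (hη : 0 < η)
    (hθ : Tendsto (fun T => exp (-η * T) * θ T) atTop (𝓝 (1 / η)))
    (hθN : ∀ S T, θ T ≤ θ S + T * N T) {b : ℝ} (hb : b < 1) :
    ∀ᶠ T in atTop, b < η * T * exp (-η * T) * N T := by
  have hhalf := tendsto_rpow_mul_exp_neg_mul_mul_comp_mul_nhds_zero hη hθ (α := 1 / 2)
    (by norm_num) (by norm_num) 0
  simp only [rpow_zero, one_mul] at hhalf
  have hlower : Tendsto
      (fun T => η * (exp (-η * T) * θ T) - η * (exp (-η * T) * θ (1 / 2 * T))) atTop (𝓝 1) := by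
    simpa [hη.ne'] using (hθ.const_mul η).sub (hhalf.const_mul η)
  filter_upwards [hlower.eventually (lt_mem_nhds hb)] with T hbT
  refine hbT.trans_le ?_
  have := mul_le_mul_of_nonneg_left (sub_le_iff_le_add'.mpr (hθN (1 / 2 * T) T))
    (mul_nonneg hη.le (exp_pos (-η * T)).le)
  linarith

theorem eventually_mul_exp_neg_mul_mul_lt {C : ℝ} (hη : 0 < η)
    (hθ : Tendsto (fun T => exp (-η * T) * θ T) atTop (𝓝 (1 / η)))
    (hNθ : ∀ S T, 0 < S → N T ≤ N S + θ T / S) (hN : ∀ T, N T ≤ C * θ T)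
    {b : ℝ} (hb : 1 < b) :
    ∀ᶠ T in atTop, η * T * exp (-η * T) * N T < b := by
  obtain ⟨α, hbα, hα₁⟩ := exists_between (inv_lt_one_of_one_lt₀ hb)
  have hα₀ : 0 < α := (inv_pos.mpr (zero_lt_one.trans hb)).trans hbα
  have hsmall := tendsto_rpow_mul_exp_neg_mul_mul_comp_mul_nhds_zero hη hθ hα₀ hα₁ 1
  simp only [rpow_one] at hsmall
  have hupper : Tendsto (fun T => C * η * (T * (exp (-η * T) * θ (α * T)))
      + η * (exp (-η * T) * θ T) / α) atTop (𝓝 α⁻¹) := by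
    simpa [hη.ne'] using (hsmall.const_mul (C * η)).add ((hθ.const_mul η).div_const α)
  filter_upwards [hupper.eventually (gt_mem_nhds (inv_lt_of_inv_lt₀ (zero_lt_one.trans hb) hbα)),
    eventually_gt_atTop 0] with T hbT hT
  refine lt_of_le_of_lt ?_ hbT
  have hcount : N T ≤ C * θ (α * T) + θ T / (α * T) :=
    (hNθ (α * T) T (mul_pos hα₀ hT)).trans (by gcongr; exact hN _)
  calc η * T * exp (-η * T) * N T
      ≤ η * T * exp (-η * T) * (C * θ (α * T) + θ T / (α * T)) := by gcongr
    _ = _ := by field_simp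

theorem tendsto_div_exp_div_of_chebyshev {C : ℝ} (hη : 0 < η)
    (hθ : Tendsto (fun T => exp (-η * T) * θ T) atTop (𝓝 (1 / η)))
    (hθN : ∀ S T, θ T ≤ θ S + T * N T) (hNθ : ∀ S T, 0 < S → N T ≤ N S + θ T / S)
    (hN : ∀ T, N T ≤ C * θ T) :
    Tendsto (fun T => N T / (exp (η * T) / (η * T))) atTop (𝓝 1) := by
  have hnormalise : ∀ T, N T / (exp (η * T) / (η * T)) = η * T * exp (-η * T) * N T := by
    intro T
    rw [div_div_eq_mul_div, neg_mul, exp_neg]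
    ring
  simp only [hnormalise]
  exact tendsto_order.2 ⟨fun b hb => eventually_lt_mul_exp_neg_mul_mul hη hθ hθN hb,
    fun b hb => eventually_mul_exp_neg_mul_mul_lt hη hθ hNθ hN hb⟩

end Asymptotics

section SublevelSum

variable {L : Type*} {l w : L → ℝ}

noncomputable def sublevelSum (l f : L → ℝ) (T : ℝ) : ℝ := ∑' γ : {γ : L // l γ ≤ T}, f γ

theorem hasSum_indicator_sublevelSum {f : L → ℝ} {T : ℝ}
    (h : Summable fun γ : {γ : L // l γ ≤ T} => f γ) :
    HasSum ({γ | l γ ≤ T}.indicator f) (sublevelSum l f T) :=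
  hasSum_subtype_iff_indicator.mp h.hasSum

theorem summable_sublevel_of_summable_mul {l₀ T : ℝ} (hl₀ : 0 < l₀) (hl : ∀ γ, l₀ ≤ l γ)
    (hw : ∀ γ, 0 ≤ w γ) (h : Summable fun γ : {γ : L // l γ ≤ T} => l γ * w γ) :
    Summable fun γ : {γ : L // l γ ≤ T} => w γ :=
  (h.div_const l₀).of_nonneg_of_le (fun γ => hw γ) fun γ => by
    rw [le_div_iff₀ hl₀]
    nlinarith [hl γ, hw γ]

theorem sublevelSum_le_inv_mul {l₀ T : ℝ} (hl₀ : 0 < l₀) (hl : ∀ γ, l₀ ≤ l γ)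
    (hw : ∀ γ, 0 ≤ w γ) (hN : Summable fun γ : {γ : L // l γ ≤ T} => w γ)
    (hθ : Summable fun γ : {γ : L // l γ ≤ T} => l γ * w γ) :
    sublevelSum l w T ≤ l₀⁻¹ * sublevelSum l (fun γ => l γ * w γ) T := by
  rw [inv_mul_eq_div, le_div_iff₀' hl₀]
  exact hasSum_le (fun γ : {γ : L // l γ ≤ T} => mul_le_mul_of_nonneg_right (hl γ) (hw γ))
    (hN.hasSum.mul_left l₀) hθ.hasSum

theorem sublevelSum_mul_le_add (hl : ∀ γ, 0 ≤ l γ) (hw : ∀ γ, 0 ≤ w γ)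
    (hθ : ∀ T, Summable fun γ : {γ : L // l γ ≤ T} => l γ * w γ)
    (hN : ∀ T, Summable fun γ : {γ : L // l γ ≤ T} => w γ) (S T : ℝ) :
    sublevelSum l (fun γ => l γ * w γ) T
      ≤ sublevelSum l (fun γ => l γ * w γ) S + T * sublevelSum l w T :=
  hasSum_le (fun γ => by
      simp only [Set.indicator_apply, Set.mem_ofPred_eq]
      split_ifs <;> nlinarith [hl γ, hw γ])
    (hasSum_indicator_sublevelSum (hθ T))
    ((hasSum_indicator_sublevelSum (hθ S)).add ((hasSum_indicator_sublevelSum (hN T)).mul_left T))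

theorem sublevelSum_le_add_div {S : ℝ} (hS : 0 < S) (hl : ∀ γ, 0 ≤ l γ) (hw : ∀ γ, 0 ≤ w γ)
    (hθ : ∀ T, Summable fun γ : {γ : L // l γ ≤ T} => l γ * w γ)
    (hN : ∀ T, Summable fun γ : {γ : L // l γ ≤ T} => w γ) (T : ℝ) :
    sublevelSum l w T ≤ sublevelSum l w S + sublevelSum l (fun γ => l γ * w γ) T / S := by
  rw [← mul_le_mul_iff_of_pos_left hS, mul_add, mul_div_cancel₀ _ hS.ne']
  exact hasSum_le (fun γ => by
      simp only [Set.indicator_apply, Set.mem_ofPred_eq]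
      split_ifs <;> nlinarith [hl γ, hw γ])
    ((hasSum_indicator_sublevelSum (hN T)).mul_left S)
    (((hasSum_indicator_sublevelSum (hN S)).mul_left S).add (hasSum_indicator_sublevelSum (hθ T)))

end SublevelSum

theorem weighted_counting_from_chebyshev_general
    {L : Type*} (l : L → ℝ) (l₀ : ℝ) (hl₀ : 0 < l₀)
    (hl : ∀ γ, l₀ ≤ l γ) (w : L → ℝ) (hw : ∀ γ, 0 ≤ w γ) (η : ℝ) (hη : 0 < η)
    (hfin : ∀ T : ℝ, Summable (fun γ : {γ : L // l γ ≤ T} => l γ.1 * w γ.1))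
    (htheta : Filter.Tendsto
      (fun T : ℝ => Real.exp (-η * T) * ∑' γ : {γ : L // l γ ≤ T}, l γ.1 * w γ.1)
      Filter.atTop (nhds (1 / η))) :
    Filter.Tendsto
      (fun T : ℝ =>
        (∑' γ : {γ : L // l γ ≤ T}, w γ.1) / (Real.exp (η * T) / (η * T)))
      Filter.atTop (nhds 1) := by
  have hl_nonneg : ∀ γ, 0 ≤ l γ := fun γ => hl₀.le.trans (hl γ)
  have hsum : ∀ T : ℝ, Summable fun γ : {γ : L // l γ ≤ T} => w γ :=
    fun T => summable_sublevel_of_summable_mul hl₀ hl hw (hfin T)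
  exact tendsto_div_exp_div_of_chebyshev (θ := sublevelSum l fun γ => l γ * w γ)
    (N := sublevelSum l w) hη htheta (sublevelSum_mul_le_add hl_nonneg hw hfin hsum)
    (fun S T hS => sublevelSum_le_add_div hS hl_nonneg hw hfin hsum T)
    (fun T => sublevelSum_le_inv_mul hl₀ hl hw (hsum T) (hfin T))

/-- Partial-summation (Abel summation) step of the Wiener–Ikehara argument:
if the length-weighted counting function `θ(T) = Σ_{l(γ) ≤ T} l(γ) w(γ)` is
finite for every `T` (here: summable over the subtype) and satisfies
`e^{-ηT} θ(T) → 1/η`, then the weighted orbit counting function satisfies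
`Σ_{l(γ) ≤ T} w(γ) ∼ e^{ηT}/(ηT)` as `T → ∞`. -/
theorem weighted_counting_from_chebyshev
    {L : Type*} [Countable L] (l : L → ℝ) (l₀ : ℝ) (hl₀ : 0 < l₀)
    (hl : ∀ γ, l₀ ≤ l γ) (w : L → ℝ) (hw : ∀ γ, 0 ≤ w γ) (η : ℝ) (hη : 0 < η)
    (hfin : ∀ T : ℝ, Summable (fun γ : {γ : L // l γ ≤ T} => l γ.1 * w γ.1))
    (htheta : Filter.Tendsto
      (fun T : ℝ => Real.exp (-η * T) * ∑' γ : {γ : L // l γ ≤ T}, l γ.1 * w γ.1)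
      Filter.atTop (nhds (1 / η))) :
    Filter.Tendsto
      (fun T : ℝ =>
        (∑' γ : {γ : L // l γ ≤ T}, w γ.1) / (Real.exp (η * T) / (η * T)))
      Filter.atTop (nhds 1) :=
  weighted_counting_from_chebyshev_general l l₀ hl₀ hl w hw η hη hfin htheta
end

section
/- Let L be a countable set, l : L → ℝ a function with l(γ) ≥ l₀ for all γ ∈ L for some constant l₀ > 0, and let w, v : L → [0,∞) be two weights. Assume there are constants C > 0 and ε > 0 and a function r : L × ℕ≥1 → ℝ such that v(γ)^k = w(γ)^k·(1 + r(γ,k)) and |r(γ,k)| ≤ C·e^{−ε·k·l(γ)} for all γ ∈ L and k ≥ 1. Let η ∈ ℝ and assume: (a) for every real σ > η the double series Σ_{γ∈L} Σ_{k≥1} w(γ)^k · e^{−k·σ·l(γ)}/k converges, so that Z_w(s) := exp( Σ_{γ,k} w(γ)^k e^{−ksl(γ)}/k ) is defined and analytic on {Re(s) > η}; and (b) there exist an open set U ⊆ ℂ containing {s : Re(s) ≥ η} and an analytic, nowhere-vanishing function g on U with Z_w(s) = g(s)/(s−η) for every s ∈ U with Re(s) > η. Then the double series Σ_{γ∈L}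 Σ_{k≥1} v(γ)^k · e^{−k·s·l(γ)}/k converges absolutely for every s with Re(s) > η, and there exist an open set U' ⊆ ℂ containing {s : Re(s) ≥ η} and an analytic, nowhere-vanishing function g' on U' such that Z_v(s) := exp( Σ_{γ,k} v(γ)^k e^{−ksl(γ)}/k ) satisfies Z_v(s) = g'(s)/(s−η) for every s ∈ U' with Re(s) > η. -/
/-!
Termwise, `log Z_v = log Z_w + D` with `D(s) = Σ w(γ)^k r(γ,k) e^{-k s l(γ)} / k`. The bound
`|r(γ,k)| ≤ C e^{-ε k l(γ)}` dominates `D` at `s` by `C` times the series of `w` at `s + ε`, so `D`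
converges absolutely, hence is holomorphic, on `Re s > η - ε`, a neighbourhood of `Re s ≥ η`.
Then `g' = g · exp D` is analytic and non-vanishing there, and `Z_v = g' / (s - η)`.
All series involved are generalized Dirichlet series `Σ aᵢ e^{-s tᵢ}`, which are holomorphic
where they converge absolutely because on a vertical strip each term is dominated by its
values on the two edges.
-/

/-- The logarithm of the weighted dynamical zeta function:
`F(s) = Σ_{γ∈L} Σ_{k≥1} u(γ)^k e^{-k s l(γ)} / k`, where `k = p.2 + 1`. -/
noncomputable def zetaLog {L : Type*} (l u : L → ℝ) (s : ℂ) : ℂ :=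
  ∑' p : L × ℕ, (u p.1 : ℂ) ^ (p.2 + 1) *
    Complex.exp (-((p.2 : ℂ) + 1) * s * (l p.1 : ℂ)) / ((p.2 : ℂ) + 1)

open Complex Set

section GenDirichletSeries

variable {ι : Type*} (a c : ι → ℂ) (t : ι → ℝ)

noncomputable def genDirichletSeries (s : ℂ) : ℂ :=
  ∑' i, a i * cexp (-(s * t i))

def GenDirichletAbsSummable (σ : ℝ) : Prop :=
  Summable fun i => ‖a i‖ * Real.exp (-(σ * t i))

variable {a c t}

lemma norm_mul_cexp_neg_mul (z s : ℂ) (x : ℝ) :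
    ‖z * cexp (-(s * x))‖ = ‖z‖ * Real.exp (-(s.re * x)) := by
  simp [Complex.norm_exp, Complex.mul_re]

lemma Real.exp_neg_mul_le_add {x σ₁ σ₂ : ℝ} (y : ℝ) (h₁ : σ₁ ≤ x) (h₂ : x ≤ σ₂) :
    Real.exp (-(x * y)) ≤ Real.exp (-(σ₁ * y)) + Real.exp (-(σ₂ * y)) := by
  rcases le_total 0 y with hy | hy
  · exact le_add_of_le_of_nonneg (Real.exp_le_exp.2 (by nlinarith)) (Real.exp_pos _).le
  · exact le_add_of_nonneg_of_le (Real.exp_pos _).le (Real.exp_le_exp.2 (by nlinarith))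

namespace GenDirichletAbsSummable

lemma summable_norm {σ : ℝ} (h : GenDirichletAbsSummable a t σ) {s : ℂ} (hs : s.re = σ) :
    Summable fun i => ‖a i * cexp (-(s * t i))‖ := by
  simp only [norm_mul_cexp_neg_mul, hs]
  exact h

lemma add {σ : ℝ} (ha : GenDirichletAbsSummable a t σ) (hc : GenDirichletAbsSummable c t σ) :
    GenDirichletAbsSummable (a + c) t σ :=
  (Summable.add ha hc).of_nonneg_of_le (fun _ => by positivity) fun i => by
    rw [← add_mul]
    exact mul_le_mul_of_nonneg_right (norm_add_le _ _) (Real.exp_pos _).le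

lemma mul_of_norm_le {r : ι → ℂ} {C ε σ : ℝ} (hr : ∀ i, ‖r i‖ ≤ C * Real.exp (-(ε * t i)))
    (ha : GenDirichletAbsSummable a t (σ + ε)) : GenDirichletAbsSummable (a * r) t σ := by
  refine (Summable.mul_left C ha).of_nonneg_of_le (fun _ => by positivity) fun i => ?_
  calc ‖a i * r i‖ * Real.exp (-(σ * t i))
      ≤ ‖a i‖ * (C * Real.exp (-(ε * t i))) * Real.exp (-(σ * t i)) := by
        rw [norm_mul]; gcongr; exact hr i
    _ = C * (‖a i‖ * Real.exp (-((σ + ε) * t i))) := by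
        rw [add_mul, neg_add, Real.exp_add]; ring

end GenDirichletAbsSummable

lemma genDirichletSeries_add {s : ℂ} (ha : GenDirichletAbsSummable a t s.re)
    (hc : GenDirichletAbsSummable c t s.re) :
    genDirichletSeries (a + c) t s = genDirichletSeries a t s + genDirichletSeries c t s := by
  simp only [genDirichletSeries, Pi.add_apply, add_mul]
  exact (ha.summable_norm rfl).of_norm.tsum_add (hc.summable_norm rfl).of_norm

lemma differentiableOn_genDirichletSeries {σ₀ : ℝ}
    (h : ∀ σ, σ₀ < σ → GenDirichletAbsSummable a t σ) :
    DifferentiableOn ℂ (genDirichletSeries a t) {s | σ₀ < s.re} := by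
  intro s hs
  obtain ⟨σ₁, hσ₀₁, hσ₁⟩ := exists_between (α := ℝ) hs
  set strip := {z : ℂ | σ₁ < z.re} ∩ {z | z.re < s.re + 1}
  have hstrip : IsOpen strip := (isOpen_lt continuous_const continuous_re).inter
    (isOpen_lt continuous_re continuous_const)
  have hdiff : DifferentiableOn ℂ (genDirichletSeries a t) strip := by
    refine differentiableOn_tsum_of_summable_norm
      (Summable.add (h σ₁ hσ₀₁) (h (s.re + 1) (by linarith))) (fun i => ?_) hstrip
      fun i z hz => ?_
    · exact ((differentiable_const _).mul
        (differentiable_id.mul_const _).neg.cexp).differentiableOn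
    · rw [norm_mul_cexp_neg_mul, ← mul_add]
      exact mul_le_mul_of_nonneg_left (Real.exp_neg_mul_le_add _ hz.1.le hz.2.le) (norm_nonneg _)
  exact (hdiff.differentiableAt (hstrip.mem_nhds ⟨hσ₁, lt_add_one s.re⟩)).differentiableWithinAt

end GenDirichletSeries

section ZetaLog

variable {L : Type*}

noncomputable def zetaCoeff (u : L → ℝ) (p : L × ℕ) : ℂ :=
  (u p.1 : ℂ) ^ (p.2 + 1) / ((p.2 : ℂ) + 1)

def iterLength (l : L → ℝ) (p : L × ℕ) : ℝ :=
  ((p.2 : ℝ) + 1) * l p.1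

lemma zetaLog_term_eq (l u : L → ℝ) (s : ℂ) (p : L × ℕ) :
    (u p.1 : ℂ) ^ (p.2 + 1) * cexp (-((p.2 : ℂ) + 1) * s * (l p.1 : ℂ)) / ((p.2 : ℂ) + 1) =
      zetaCoeff u p * cexp (-(s * iterLength l p)) := by
  simp only [zetaCoeff, iterLength]
  push_cast
  ring_nf

lemma zetaLog_eq_genDirichletSeries (l u : L → ℝ) :
    zetaLog l u = genDirichletSeries (zetaCoeff u) (iterLength l) :=
  funext fun s => tsum_congr (zetaLog_term_eq l u s)

lemma genDirichletAbsSummable_zetaCoeff_iff (l u : L → ℝ) (σ : ℝ) :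
    GenDirichletAbsSummable (zetaCoeff u) (iterLength l) σ ↔
      Summable fun p : L × ℕ =>
        u p.1 ^ (p.2 + 1) * Real.exp (-((p.2 : ℝ) + 1) * σ * l p.1) / ((p.2 : ℝ) + 1) := by
  rw [← summable_abs_iff]
  refine Eq.to_iff (congrArg Summable (funext fun p => ?_))
  have h := norm_mul_cexp_neg_mul (zetaCoeff u p) σ (iterLength l p)
  rw [ofReal_re] at h
  rw [← h, ← zetaLog_term_eq, ← Real.norm_eq_abs, ← norm_real]
  push_cast
  rfl

lemma zetaCoeff_eq_add_mul {w v : L → ℝ} {r : L → ℕ → ℝ}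
    (h : ∀ γ k, v γ ^ (k + 1) = w γ ^ (k + 1) * (1 + r γ k)) :
    zetaCoeff v = zetaCoeff w + zetaCoeff w * fun p => (r p.1 p.2 : ℂ) := by
  funext p
  have hp : (v p.1 : ℂ) ^ (p.2 + 1) = (w p.1 : ℂ) ^ (p.2 + 1) * (1 + r p.1 p.2) := by
    exact_mod_cast h p.1 p.2
  simp only [zetaCoeff, Pi.add_apply, Pi.mul_apply, hp]
  ring

end ZetaLog

/-- Here `r γ k` is the relative error `r(γ, k+1)` of the `(k+1)`-st iterate. -/
theorem close_weights_zeta_extension_general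
    {L : Type*} (l : L → ℝ) (w v : L → ℝ)
    (C ε : ℝ) (hε : 0 < ε) (r : L → ℕ → ℝ)
    (hr : ∀ γ : L, ∀ k : ℕ,
      v γ ^ (k + 1) = w γ ^ (k + 1) * (1 + r γ k) ∧
      |r γ k| ≤ C * Real.exp (-ε * ((k : ℝ) + 1) * l γ))
    (η : ℝ)
    (hconv : ∀ σ : ℝ, η < σ →
      Summable (fun p : L × ℕ =>
        w p.1 ^ (p.2 + 1) * Real.exp (-((p.2 : ℝ) + 1) * σ * l p.1) /
          ((p.2 : ℝ) + 1)))
    (hext : ∃ U : Set ℂ, IsOpen U ∧ {s : ℂ | η ≤ s.re} ⊆ U ∧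
      ∃ g : ℂ → ℂ, AnalyticOnNhd ℂ g U ∧ (∀ s ∈ U, g s ≠ 0) ∧
        ∀ s ∈ U, η < s.re →
          Complex.exp (zetaLog l w s) = g s / (s - (η : ℂ))) :
    (∀ s : ℂ, η < s.re →
      Summable (fun p : L × ℕ =>
        ‖(v p.1 : ℂ) ^ (p.2 + 1) *
          Complex.exp (-((p.2 : ℂ) + 1) * s * (l p.1 : ℂ)) / ((p.2 : ℂ) + 1)‖)) ∧
    ∃ U' : Set ℂ, IsOpen U' ∧ {s : ℂ | η ≤ s.re} ⊆ U' ∧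
      ∃ g' : ℂ → ℂ, AnalyticOnNhd ℂ g' U' ∧ (∀ s ∈ U', g' s ≠ 0) ∧
        ∀ s ∈ U', η < s.re →
          Complex.exp (zetaLog l v s) = g' s / (s - (η : ℂ)) := by
  obtain ⟨U, hU, hηU, g, hg, hg₀, hgw⟩ := hext
  set ρ : L × ℕ → ℂ := fun p => r p.1 p.2
  have hρ (p : L × ℕ) : ‖ρ p‖ ≤ C * Real.exp (-(ε * iterLength l p)) := by
    rw [norm_real, Real.norm_eq_abs, iterLength, ← mul_assoc, ← neg_mul, ← neg_mul]
    exact (hr p.1 p.2).2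
  have hw (σ : ℝ) (hσ : η < σ) : GenDirichletAbsSummable (zetaCoeff w) (iterLength l) σ :=
    (genDirichletAbsSummable_zetaCoeff_iff l w σ).2 (hconv σ hσ)
  have hwρ (σ : ℝ) (hσ : η - ε < σ) :
      GenDirichletAbsSummable (zetaCoeff w * ρ) (iterLength l) σ :=
    (hw (σ + ε) (by linarith)).mul_of_norm_le hρ
  have hv (σ : ℝ) (hσ : η < σ) : GenDirichletAbsSummable (zetaCoeff v) (iterLength l) σ := by
    rw [zetaCoeff_eq_add_mul fun γ k => (hr γ k).1]
    exact (hw σ hσ).add (hwρ σ (by linarith))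
  have hV : IsOpen {s : ℂ | η - ε < s.re} := isOpen_lt continuous_const continuous_re
  refine ⟨fun s hs => ?_, U ∩ {s | η - ε < s.re}, hU.inter hV,
    fun s (hs : η ≤ s.re) => ⟨hηU hs, show η - ε < s.re by linarith⟩,
    fun s => g s * cexp (genDirichletSeries (zetaCoeff w * ρ) (iterLength l) s), ?_,
    fun s hs => mul_ne_zero (hg₀ s hs.1) (exp_ne_zero _), fun s hs hsη => ?_⟩
  · simpa only [zetaLog_term_eq] using (hv s.re hs).summable_norm rfl
  · exact (hg.mono inter_subset_left).mul
      (((differentiableOn_genDirichletSeries hwρ).cexp.mono inter_subset_right).analyticOnNhd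
        (hU.inter hV))
  · rw [zetaLog_eq_genDirichletSeries, zetaCoeff_eq_add_mul fun γ k => (hr γ k).1,
      genDirichletSeries_add (hw _ hsη) (hwρ _ (by linarith)), exp_add,
      ← zetaLog_eq_genDirichletSeries, hgw s hs.1 hsη, div_mul_eq_mul_div]

/-- Comparison of zeta functions of asymptotically exponentially close weights
(part 1).  Here `r γ k` models the relative error `r(γ, k+1)` for the `(k+1)`-st
iterate: `v(γ)^{k+1} = w(γ)^{k+1}(1 + r(γ,k+1))` with
`|r(γ,k+1)| ≤ C e^{-ε (k+1) l(γ)}`.  If `Z_w` converges on `Re s > η` and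
extends to a non-vanishing analytic function on a neighbourhood of
`Re s ≥ η` except for a simple pole at `η`, then so does `Z_v`. -/
theorem close_weights_zeta_extension
    {L : Type*} [Countable L] (l : L → ℝ) (l₀ : ℝ) (hl₀ : 0 < l₀)
    (hl : ∀ γ, l₀ ≤ l γ) (w v : L → ℝ) (hw : ∀ γ, 0 ≤ w γ) (hv : ∀ γ, 0 ≤ v γ)
    (C ε : ℝ) (hC : 0 < C) (hε : 0 < ε) (r : L → ℕ → ℝ)
    (hr : ∀ γ : L, ∀ k : ℕ,
      v γ ^ (k + 1) = w γ ^ (k + 1) * (1 + r γ k) ∧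
      |r γ k| ≤ C * Real.exp (-ε * ((k : ℝ) + 1) * l γ))
    (η : ℝ)
    (hconv : ∀ σ : ℝ, η < σ →
      Summable (fun p : L × ℕ =>
        w p.1 ^ (p.2 + 1) * Real.exp (-((p.2 : ℝ) + 1) * σ * l p.1) /
          ((p.2 : ℝ) + 1)))
    (hext : ∃ U : Set ℂ, IsOpen U ∧ {s : ℂ | η ≤ s.re} ⊆ U ∧
      ∃ g : ℂ → ℂ, AnalyticOnNhd ℂ g U ∧ (∀ s ∈ U, g s ≠ 0) ∧
        ∀ s ∈ U, η < s.re →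
          Complex.exp (zetaLog l w s) = g s / (s - (η : ℂ))) :
    (∀ s : ℂ, η < s.re →
      Summable (fun p : L × ℕ =>
        ‖(v p.1 : ℂ) ^ (p.2 + 1) *
          Complex.exp (-((p.2 : ℂ) + 1) * s * (l p.1 : ℂ)) / ((p.2 : ℂ) + 1)‖)) ∧
    ∃ U' : Set ℂ, IsOpen U' ∧ {s : ℂ | η ≤ s.re} ⊆ U' ∧
      ∃ g' : ℂ → ℂ, AnalyticOnNhd ℂ g' U' ∧ (∀ s ∈ U', g' s ≠ 0) ∧
        ∀ s ∈ U', η < s.re →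
          Complex.exp (zetaLog l v s) = g' s / (s - (η : ℂ)) :=
  close_weights_zeta_extension_general l w v C ε hε r hr η hconv hext
end

section
/- Let L be a countable set, l : L → ℝ a function with l(γ) ≥ l₀ for all γ ∈ L for some constant l₀ > 0, w, v : L → [0,∞) two weights, C > 0, ε > 0, and r : L × ℕ≥1 → ℝ with v(γ)^k = w(γ)^k·(1 + r(γ,k)) and |r(γ,k)| ≤ C·e^{−ε·k·l(γ)} for all γ ∈ L and k ≥ 1. Assume the double series Σ_{γ∈L} Σ_{k≥1} w(γ)^k · e^{−k·σ·l(γ)}/k converges for every real σ > η. Then: (i) the double series G(s) := Σ_{γ∈L} Σ_{k≥1} w(γ)^k·r(γ,k)·e^{−k·s·l(γ)}/k converges absolutely for every s ∈ ℂ with Re(s) > η − ε and defines an analytic function on {Re(s) > η − ε}; and (ii) for every s with Re(s) > η one has the factorization Z_v(s) = Z_w(s)·exp(G(s)), where Z_u(s) := exp( Σ_{γ,k} u(γ)^k e^{−ksl(γ)}/k ) for u = w, v. -/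
/-- The error zeta factor `G(s) = Σ_{γ,k} w(γ)^k r(γ,k) e^{-k s l(γ)} / k`. -/
noncomputable def errorZetaLog {L : Type*} (l w : L → ℝ) (r : L → ℕ → ℝ)
    (s : ℂ) : ℂ :=
  ∑' p : L × ℕ, (w p.1 : ℂ) ^ (p.2 + 1) * (r p.1 p.2 : ℂ) *
    Complex.exp (-((p.2 : ℂ) + 1) * s * (l p.1 : ℂ)) / ((p.2 : ℂ) + 1)

/-!
Since `v(γ)^k = w(γ)^k (1 + r(γ,k))`, the series of `zetaLog l v` is termwise the sum of
those of `zetaLog l w` and `errorZetaLog l w r`, so `Z_v = Z_w · exp G` wherever both series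
converge. The bound `|r(γ,k)| ≤ C e^{-ε k l(γ)}` shifts the abscissa: the `k`-th error term
at `s` is at most `C` times the `k`-th term of the real series of `w` at `Re s + ε`. Hence `G`
converges absolutely for `Re s > η - ε`, locally uniformly, and the Weierstrass theorem makes
it analytic there.
-/

open Complex (exp)

lemma norm_mul_cexp_div_succ (a s : ℂ) (l : ℝ) (k : ℕ) :
    ‖a * exp (-((k : ℂ) + 1) * s * l) / ((k : ℂ) + 1)‖ =
      ‖a‖ * Real.exp (-((k : ℝ) + 1) * s.re * l) / ((k : ℝ) + 1) := by
  have hre : (-((k : ℂ) + 1) * s * l).re = -((k : ℝ) + 1) * s.re * l := by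
    rw [show -((k : ℂ) + 1) * s * l = ((-((k + 1) * l) : ℝ) : ℂ) * s by push_cast; ring,
      Complex.re_ofReal_mul]
    ring
  have hk : ‖(k : ℂ) + 1‖ = (k : ℝ) + 1 := by exact_mod_cast Complex.norm_natCast (k + 1)
  rw [norm_div, norm_mul, Complex.norm_exp, hre, hk]

lemma analyticOnNhd_tsum_of_norm_le {ι : Type*} [Countable ι] {f : ι → ℂ → ℂ}
    {u : ι → ℝ} {σ : ℝ} (hu : Summable u) (hf : ∀ i, Differentiable ℂ (f i))
    (hfu : ∀ i s, σ < s.re → ‖f i s‖ ≤ u i) :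
    AnalyticOnNhd ℂ (fun s => ∑' i, f i s) {s | σ < s.re} := by
  have hopen : IsOpen {s : ℂ | σ < s.re} :=
    isOpen_lt continuous_const Complex.continuous_re
  exact (Complex.differentiableOn_tsum_of_summable_norm hu
    (fun i => (hf i).differentiableOn) hopen hfu).analyticOnNhd hopen

section

variable {L : Type*}

noncomputable def realZetaTerm (l u : L → ℝ) (σ : ℝ) (p : L × ℕ) : ℝ :=
  u p.1 ^ (p.2 + 1) * Real.exp (-((p.2 : ℝ) + 1) * σ * l p.1) / ((p.2 : ℝ) + 1)

noncomputable def zetaTerm (l u : L → ℝ) (s : ℂ) (p : L × ℕ) : ℂ :=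
  (u p.1 : ℂ) ^ (p.2 + 1) * exp (-((p.2 : ℂ) + 1) * s * (l p.1 : ℂ)) / ((p.2 : ℂ) + 1)

noncomputable def errorZetaTerm (l w : L → ℝ) (r : L → ℕ → ℝ) (s : ℂ) (p : L × ℕ) :
    ℂ :=
  (w p.1 : ℂ) ^ (p.2 + 1) * (r p.1 p.2 : ℂ) *
    exp (-((p.2 : ℂ) + 1) * s * (l p.1 : ℂ)) / ((p.2 : ℂ) + 1)

variable {l v w : L → ℝ} {r : L → ℕ → ℝ}

lemma norm_errorZetaTerm_le {C ε σ : ℝ} {s : ℂ}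
    (hl : ∀ γ, 0 ≤ l γ) (hw : ∀ γ, 0 ≤ w γ)
    (hr : ∀ γ k, |r γ k| ≤ C * Real.exp (-ε * ((k : ℝ) + 1) * l γ))
    (hs : σ ≤ s.re) (p : L × ℕ) :
    ‖errorZetaTerm l w r s p‖ ≤ C * realZetaTerm l w (σ + ε) p := by
  obtain ⟨γ, k⟩ := p
  have hk : (0 : ℝ) < k + 1 := by positivity
  have hexp :
      Real.exp (-((k : ℝ) + 1) * s.re * l γ) ≤ Real.exp (-((k : ℝ) + 1) * σ * l γ) := by
    have := mul_le_mul_of_nonneg_right (mul_le_mul_of_nonneg_left hs hk.le) (hl γ)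
    exact Real.exp_le_exp.mpr (by linarith)
  have hsplit : C * realZetaTerm l w (σ + ε) (γ, k) = w γ ^ (k + 1) *
      (C * Real.exp (-ε * ((k : ℝ) + 1) * l γ)) *
        Real.exp (-((k : ℝ) + 1) * σ * l γ) / ((k : ℝ) + 1) := by
    rw [realZetaTerm, show -((k : ℝ) + 1) * (σ + ε) * l γ =
      -ε * ((k : ℝ) + 1) * l γ + -((k : ℝ) + 1) * σ * l γ by ring, Real.exp_add]
    ring
  rw [errorZetaTerm, norm_mul_cexp_div_succ, hsplit, norm_mul, norm_pow, Complex.norm_real,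
    Complex.norm_real, Real.norm_of_nonneg (hw γ), Real.norm_eq_abs]
  have hw' : 0 ≤ w γ ^ (k + 1) := pow_nonneg (hw γ) _
  gcongr
  · exact mul_nonneg hw' ((abs_nonneg _).trans (hr γ k))
  · exact hr γ k

lemma summable_zetaTerm {s : ℂ} (hw : ∀ γ, 0 ≤ w γ)
    (hsum : Summable (realZetaTerm l w s.re)) : Summable (zetaTerm l w s) := by
  refine Summable.of_norm ((summable_congr fun p => ?_).mpr hsum)
  rw [zetaTerm, norm_mul_cexp_div_succ, norm_pow, Complex.norm_real,
    Real.norm_of_nonneg (hw p.1), realZetaTerm]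

lemma zetaLog_eq_add_errorZetaLog {s : ℂ}
    (hvw : ∀ γ k, v γ ^ (k + 1) = w γ ^ (k + 1) * (1 + r γ k))
    (hw : Summable (zetaTerm l w s)) (he : Summable (errorZetaTerm l w r s)) :
    zetaLog l v s = zetaLog l w s + errorZetaLog l w r s := by
  change ∑' p, zetaTerm l v s p = ∑' p, zetaTerm l w s p + ∑' p, errorZetaTerm l w r s p
  rw [← hw.tsum_add he]
  refine tsum_congr fun ⟨γ, k⟩ => ?_
  have hc : (v γ : ℂ) ^ (k + 1) = (w γ : ℂ) ^ (k + 1) * (1 + (r γ k : ℂ)) := by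
    exact_mod_cast hvw γ k
  rw [zetaTerm, zetaTerm, errorZetaTerm, hc]
  ring

lemma analyticOnNhd_errorZetaLog [Countable L] {C ε η : ℝ}
    (hl : ∀ γ, 0 ≤ l γ) (hw : ∀ γ, 0 ≤ w γ)
    (hr : ∀ γ k, |r γ k| ≤ C * Real.exp (-ε * ((k : ℝ) + 1) * l γ))
    (hconv : ∀ σ, η < σ → Summable (realZetaTerm l w σ)) :
    AnalyticOnNhd ℂ (errorZetaLog l w r) {s | η - ε < s.re} := by
  intro s₀ (hs₀ : η - ε < s₀.re)
  obtain ⟨σ, hησ, hσs₀⟩ := exists_between hs₀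
  have hentire : ∀ p, Differentiable ℂ (fun s => errorZetaTerm l w r s p) := fun p => by
    unfold errorZetaTerm
    fun_prop
  exact analyticOnNhd_tsum_of_norm_le ((hconv (σ + ε) (by linarith)).mul_left C) hentire
    (fun p s hs => norm_errorZetaTerm_le hl hw hr hs.le p) s₀ hσs₀

end

theorem close_weights_zeta_factorization_general
    {L : Type*} [Countable L] (l : L → ℝ) (l₀ : ℝ) (hl₀ : 0 < l₀)
    (hl : ∀ γ, l₀ ≤ l γ) (w v : L → ℝ) (hw : ∀ γ, 0 ≤ w γ)
    (C ε : ℝ) (hε : 0 < ε) (r : L → ℕ → ℝ)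
    (hr : ∀ γ : L, ∀ k : ℕ,
      v γ ^ (k + 1) = w γ ^ (k + 1) * (1 + r γ k) ∧
      |r γ k| ≤ C * Real.exp (-ε * ((k : ℝ) + 1) * l γ))
    (η : ℝ)
    (hconv : ∀ σ : ℝ, η < σ →
      Summable (fun p : L × ℕ =>
        w p.1 ^ (p.2 + 1) * Real.exp (-((p.2 : ℝ) + 1) * σ * l p.1) /
          ((p.2 : ℝ) + 1))) :
    (∀ s : ℂ, η - ε < s.re →
      Summable (fun p : L × ℕ =>
        ‖(w p.1 : ℂ) ^ (p.2 + 1) * (r p.1 p.2 : ℂ) *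
          Complex.exp (-((p.2 : ℂ) + 1) * s * (l p.1 : ℂ)) / ((p.2 : ℂ) + 1)‖)) ∧
    AnalyticOnNhd ℂ (fun s : ℂ => errorZetaLog l w r s) {s : ℂ | η - ε < s.re} ∧
    ∀ s : ℂ, η < s.re →
      Complex.exp (zetaLog l v s) =
        Complex.exp (zetaLog l w s) * Complex.exp (errorZetaLog l w r s) := by
  have hl' : ∀ γ, 0 ≤ l γ := fun γ => hl₀.le.trans (hl γ)
  have hr' := fun γ k => (hr γ k).2
  have herr : ∀ s : ℂ, η - ε < s.re → Summable fun p => ‖errorZetaTerm l w r s p‖ :=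
    fun s hs => Summable.of_nonneg_of_le (fun _ => norm_nonneg _)
      (norm_errorZetaTerm_le hl' hw hr' le_rfl) ((hconv (s.re + ε) (by linarith)).mul_left C)
  refine ⟨herr, analyticOnNhd_errorZetaLog hl' hw hr' hconv, fun s hs => ?_⟩
  rw [← Complex.exp_add, zetaLog_eq_add_errorZetaLog (fun γ k => (hr γ k).1)
    (summable_zetaTerm hw (hconv s.re hs)) (herr s (by linarith)).of_norm]

/-- Factorization `Z_v = Z_w · exp G` for asymptotically exponentially close
weights: the error series `G` converges absolutely on the strictly larger
half-plane `Re s > η - ε` and is analytic there; on `Re s > η` the weighted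
zeta functions satisfy `Z_v(s) = Z_w(s) · exp(G(s))`. -/
theorem close_weights_zeta_factorization
    {L : Type*} [Countable L] (l : L → ℝ) (l₀ : ℝ) (hl₀ : 0 < l₀)
    (hl : ∀ γ, l₀ ≤ l γ) (w v : L → ℝ) (hw : ∀ γ, 0 ≤ w γ) (hv : ∀ γ, 0 ≤ v γ)
    (C ε : ℝ) (hC : 0 < C) (hε : 0 < ε) (r : L → ℕ → ℝ)
    (hr : ∀ γ : L, ∀ k : ℕ,
      v γ ^ (k + 1) = w γ ^ (k + 1) * (1 + r γ k) ∧
      |r γ k| ≤ C * Real.exp (-ε * ((k : ℝ) + 1) * l γ))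
    (η : ℝ)
    (hconv : ∀ σ : ℝ, η < σ →
      Summable (fun p : L × ℕ =>
        w p.1 ^ (p.2 + 1) * Real.exp (-((p.2 : ℝ) + 1) * σ * l p.1) /
          ((p.2 : ℝ) + 1))) :
    (∀ s : ℂ, η - ε < s.re →
      Summable (fun p : L × ℕ =>
        ‖(w p.1 : ℂ) ^ (p.2 + 1) * (r p.1 p.2 : ℂ) *
          Complex.exp (-((p.2 : ℂ) + 1) * s * (l p.1 : ℂ)) / ((p.2 : ℂ) + 1)‖)) ∧
    AnalyticOnNhd ℂ (fun s : ℂ => errorZetaLog l w r s) {s : ℂ | η - ε < s.re} ∧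
    ∀ s : ℂ, η < s.re →
      Complex.exp (zetaLog l v s) =
        Complex.exp (zetaLog l w s) * Complex.exp (errorZetaLog l w r s) :=
  close_weights_zeta_factorization_general l l₀ hl₀ hl w v hw C ε hε r hr η hconv
end

section
/- Let n ≥ 1, let P be a real (2n)×(2n) matrix, and let a > 0, ℓ > 0. Suppose the multiset of roots in ℂ (with multiplicity) of the characteristic polynomial of P can be enumerated as λ₁, …, λ_{2n} with |λ_i| ≥ e^{aℓ} for 1 ≤ i ≤ n and |λ_i| ≤ e^{−aℓ} for n+1 ≤ i ≤ 2n. Then for every integer k ≥ 1, det(I − P^k) ≠ 0 and | |det(I − P^k)|^{−1/2} · (Π_{i=1}^{n} |λ_i|)^{k/2} − 1 | ≤ (1 − e^{−akℓ})^{−n} − 1. -/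
/-!
Over `ℂ`, `det (1 - P ^ k) = ∏ i, (1 - λᵢ ^ k)` (determinant of a polynomial in `P`). Factoring
`λᵢ ^ k` out of the expanding factors gives `|det (1 - P ^ k)| = (∏_{i < n} |λᵢ|) ^ k * R`, where
`R = ∏ i, |1 - wᵢ|` with `wᵢ = λᵢ ^ (-k)` for `i < n`, `wᵢ = λᵢ ^ k` otherwise, and all
`|wᵢ| ≤ ε = e^{-akℓ}`. Hence `(1 - ε) ^ (2n) ≤ R ≤ (1 - ε) ^ (-2n)` and the weight ratio is
`R ^ (-1/2)`, which lies in `[L, L⁻¹]` for `L = (1 - ε) ^ n`; finally `L⁻¹ - 1 ≥ 1 - L`.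
-/

open Finset

section NormOneSub

variable {𝕜 : Type*} [NormedField 𝕜]

theorem norm_one_sub_eq_norm_mul_norm_one_sub_inv {z : 𝕜} (hz : z ≠ 0) :
    ‖1 - z‖ = ‖z‖ * ‖1 - z⁻¹‖ := by
  rw [← norm_mul, mul_sub, mul_one, mul_inv_cancel₀ hz, norm_sub_rev]

theorem norm_inv_pow_le_inv_pow {z : 𝕜} {r : ℝ} (hr : 0 < r) (hz : r ≤ ‖z‖) (k : ℕ) :
    ‖(z ^ k)⁻¹‖ ≤ r⁻¹ ^ k := by
  rw [norm_inv, norm_pow, ← inv_pow]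
  exact pow_le_pow_left₀ (inv_nonneg.2 (norm_nonneg z)) (inv_anti₀ hr hz) k

theorem one_sub_le_norm_one_sub {w : 𝕜} {ε : ℝ} (hw : ‖w‖ ≤ ε) : 1 - ε ≤ ‖1 - w‖ := by
  have := norm_sub_norm_le (1 : 𝕜) w
  rw [norm_one] at this
  linarith

theorem norm_one_sub_le_inv_one_sub {w : 𝕜} {ε : ℝ} (hε : ε < 1) (hw : ‖w‖ ≤ ε) :
    ‖1 - w‖ ≤ (1 - ε)⁻¹ := by
  have h0 : 0 ≤ ε := (norm_nonneg w).trans hw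
  calc ‖1 - w‖ ≤ 1 + ε := by
        have := norm_sub_le (1 : 𝕜) w
        rw [norm_one] at this
        linarith
    _ ≤ (1 - ε)⁻¹ := by
        rw [← one_div, le_div_iff₀ (by linarith)]
        nlinarith

theorem pow_card_le_prod_norm_one_sub {ι : Type*} (s : Finset ι) {w : ι → 𝕜} {ε : ℝ}
    (hε : ε < 1) (hw : ∀ i ∈ s, ‖w i‖ ≤ ε) :
    (1 - ε) ^ #s ≤ ∏ i ∈ s, ‖1 - w i‖ ∧ ∏ i ∈ s, ‖1 - w i‖ ≤ ((1 - ε) ^ #s)⁻¹ := by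
  rw [← prod_const, ← prod_inv_distrib]
  exact ⟨prod_le_prod (fun _ _ => by linarith) fun i hi => one_sub_le_norm_one_sub (hw i hi),
    prod_le_prod (fun _ _ => norm_nonneg _) fun i hi => norm_one_sub_le_inv_one_sub hε (hw i hi)⟩

theorem prod_norm_one_sub_eq_mul_prod_norm_one_sub_inv {ι : Type*} [Fintype ι] [DecidableEq ι]
    (s : Finset ι) {z : ι → 𝕜} (hz : ∀ i ∈ s, z i ≠ 0) :
    ∏ i, ‖1 - z i‖ = (∏ i ∈ s, ‖z i‖) * ∏ i, ‖1 - if i ∈ s then (z i)⁻¹ else z i‖ := by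
  have hfactor : ∀ i, ‖1 - z i‖ =
      (if i ∈ s then ‖z i‖ else 1) * ‖1 - if i ∈ s then (z i)⁻¹ else z i‖ := by
    intro i
    split_ifs with hi
    · exact norm_one_sub_eq_norm_mul_norm_one_sub_inv (hz i hi)
    · rw [one_mul]
  rw [prod_congr rfl fun i _ => hfactor i, prod_mul_distrib, prod_ite_mem, univ_inter]

end NormOneSub

theorem abs_inv_sub_one_le_inv_sub_one {L x : ℝ} (hL : 0 < L) (hLx : L ≤ x) (hxL : x ≤ L⁻¹) :
    |x⁻¹ - 1| ≤ L⁻¹ - 1 := by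
  have hx : 0 < x := hL.trans_le hLx
  have hinv_le : x⁻¹ ≤ L⁻¹ := inv_anti₀ hL hLx
  have hle_inv : L ≤ x⁻¹ := by rwa [le_inv_comm₀ hL hx]
  have hAMGM : 2 ≤ L + L⁻¹ := by
    rw [← sub_nonneg, show L + L⁻¹ - 2 = (L - 1) ^ 2 / L by field_simp; ring]
    positivity
  rw [abs_le]
  constructor <;> linarith

theorem abs_inv_sqrt_sub_one_le {L R : ℝ} (hL : 0 < L) (hLR : L ^ 2 ≤ R) (hRL : R ≤ (L ^ 2)⁻¹) :
    |(√R)⁻¹ - 1| ≤ L⁻¹ - 1 := by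
  refine abs_inv_sub_one_le_inv_sub_one hL ((Real.le_sqrt' hL).2 hLR) ?_
  rwa [Real.sqrt_le_left (by positivity), inv_pow]

theorem rpow_neg_half_pow_mul_mul_rpow_half {A R : ℝ} (hA : 0 < A) (hR : 0 ≤ R) (k : ℕ) :
    (A ^ k * R) ^ (-(1 / 2 : ℝ)) * A ^ ((k : ℝ) / 2) = (√R)⁻¹ := by
  rw [Real.mul_rpow (by positivity) hR, ← Real.rpow_natCast, ← Real.rpow_mul hA.le,
    mul_right_comm, ← Real.rpow_add hA, Real.rpow_neg hR, Real.sqrt_eq_rpow]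
  ring_nf
  rw [Real.rpow_zero, one_mul]

namespace Matrix

open Polynomial

variable {K ι : Type*} [Field K] [IsAlgClosed K] [Fintype ι] [DecidableEq ι]

theorem card_eq_card_roots_charpoly (M : Matrix ι ι K) :
    Fintype.card ι = Multiset.card M.charpoly.roots := by
  rw [← (IsAlgClosed.splits M.charpoly).natDegree_eq_card_roots, charpoly_natDegree_eq_dim]

theorem det_aeval_X_sub_C (M : Matrix ι ι K) (z : K) :
    (aeval M (X - C z)).det = (M.charpoly.roots.map (· - z)).prod := by
  have hscalar : algebraMap K (Matrix ι ι K) z = scalar ι z := rfl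
  rw [map_sub, aeval_X, aeval_C, hscalar, ← neg_sub, det_neg, ← eval_charpoly,
    (IsAlgClosed.splits M.charpoly).eval_eq_prod_roots_of_monic (charpoly_monic M),
    card_eq_card_roots_charpoly M, ← Multiset.card_map (z - ·), ← Multiset.prod_map_neg,
    Multiset.map_map]
  simp only [Function.comp_def, neg_sub]

theorem det_aeval_eq_prod_roots_charpoly (M : Matrix ι ι K) (q : K[X]) :
    (aeval M q).det = (M.charpoly.roots.map q.eval).prod := by
  -- `det ∘ aeval M` is multiplicative on the commutative ring `K[X]`, so `q` may be split into
  -- linear factors.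
  let φ : K[X] →* K := detMonoidHom.comp (aeval M).toMonoidHom
  have hφ : ∀ p, φ p = (aeval M p).det := fun _ => rfl
  have hscalar : ∀ c, algebraMap K (Matrix ι ι K) c = scalar ι c := fun _ => rfl
  rw [← hφ, (IsAlgClosed.splits q).eq_prod_roots, map_mul, map_multiset_prod, Multiset.map_map]
  simp only [Function.comp_def, hφ, det_aeval_X_sub_C, aeval_C, hscalar, scalar_apply,
    det_diagonal, prod_const, card_univ, eval_mul, eval_C, eval_multiset_prod, Multiset.map_map,
    eval_sub, eval_X]
  rw [Multiset.prod_map_mul, Multiset.map_const', Multiset.prod_replicate,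
    card_eq_card_roots_charpoly M, Multiset.prod_map_prod_map]

theorem det_one_sub_pow_eq_prod_roots_charpoly (M : Matrix ι ι K) (k : ℕ) :
    (1 - M ^ k).det = (M.charpoly.roots.map fun z => 1 - z ^ k).prod := by
  have h := det_aeval_eq_prod_roots_charpoly M (1 - X ^ k)
  simp only [map_sub, map_one, map_pow, aeval_X] at h
  simpa only [eval_sub, eval_one, eval_pow, eval_X] using h

theorem abs_det_one_sub_pow_eq_prod_norm {κ : Type*} [Fintype κ] (P : Matrix ι ι ℝ) {lam : κ → ℂ}
    (hroots : (P.charpoly.map (algebraMap ℝ ℂ)).roots = univ.val.map lam) (k : ℕ) :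
    |(1 - P ^ k).det| = ∏ i, ‖1 - lam i ^ k‖ := by
  rw [← Real.norm_eq_abs, ← Complex.norm_real, ← Complex.coe_algebraMap, RingHom.map_det,
    map_sub, map_one, map_pow, RingHom.mapMatrix_apply, det_one_sub_pow_eq_prod_roots_charpoly,
    charpoly_map, hroots, Multiset.map_map, ← norm_prod, prod_eq_multiset_prod]
  rfl

end Matrix

theorem det_one_sub_poincare_iterate_SBR_weight_general
    (n : ℕ) (P : Matrix (Fin (2 * n)) (Fin (2 * n)) ℝ)
    (a ℓ : ℝ) (ha : 0 < a) (hℓ : 0 < ℓ) (lam : Fin (2 * n) → ℂ)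
    (hroots : (P.charpoly.map (algebraMap ℝ ℂ)).roots =
      Finset.univ.val.map lam)
    (hexp : ∀ i : Fin (2 * n), (i : ℕ) < n → Real.exp (a * ℓ) ≤ ‖lam i‖)
    (hcon : ∀ i : Fin (2 * n), n ≤ (i : ℕ) → ‖lam i‖ ≤ Real.exp (-(a * ℓ))) :
    ∀ k : ℕ, 1 ≤ k →
      (1 - P ^ k).det ≠ 0 ∧
      |(|(1 - P ^ k).det| ^ (-(1 / 2 : ℝ)) *
          (∏ i ∈ Finset.univ.filter (fun i : Fin (2 * n) => (i : ℕ) < n),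
            ‖lam i‖) ^ ((k : ℝ) / 2) - 1)| ≤
        (1 - Real.exp (-(a * (k : ℝ) * ℓ))) ^ (-(n : ℤ)) - 1 := by
  intro k hk
  set s := univ.filter fun i : Fin (2 * n) => (i : ℕ) < n
  set ε := Real.exp (-(a * k * ℓ)) with hε_def
  set w : Fin (2 * n) → ℂ := fun i => if i ∈ s then (lam i ^ k)⁻¹ else lam i ^ k
  have hε : ε = (Real.exp (a * ℓ))⁻¹ ^ k := by
    rw [hε_def, ← Real.exp_neg, ← Real.exp_nat_mul]
    ring_nf
  have hε1 : ε < 1 :=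
    Real.exp_lt_one_iff.2 (neg_lt_zero.2 (mul_pos (mul_pos ha (by exact_mod_cast hk)) hℓ))
  have hlam : ∀ i ∈ s, 0 < ‖lam i‖ := fun i hi =>
    (Real.exp_pos _).trans_le (hexp i (mem_filter.1 hi).2)
  have hw : ∀ i ∈ univ, ‖w i‖ ≤ ε := by
    intro i _
    rw [hε]
    by_cases hi : i ∈ s
    · simpa only [w, if_pos hi] using
        norm_inv_pow_le_inv_pow (Real.exp_pos _) (hexp i (mem_filter.1 hi).2) k
    · have hcon_i := hcon i (by simpa [s] using hi)
      rw [Real.exp_neg] at hcon_i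
      simpa only [w, if_neg hi, norm_pow] using pow_le_pow_left₀ (norm_nonneg _) hcon_i k
  have hdet : |(1 - P ^ k).det| = (∏ i ∈ s, ‖lam i‖) ^ k * ∏ i, ‖1 - w i‖ := by
    rw [P.abs_det_one_sub_pow_eq_prod_norm hroots,
      prod_norm_one_sub_eq_mul_prod_norm_one_sub_inv s
        fun i hi => pow_ne_zero k (norm_pos_iff.1 (hlam i hi)), ← prod_pow]
    simp only [norm_pow, w]
  obtain ⟨hlow, hup⟩ := pow_card_le_prod_norm_one_sub univ hε1 hw
  rw [card_univ, Fintype.card_fin, pow_mul'] at hlow hup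
  have hL : 0 < (1 - ε) ^ n := pow_pos (by linarith) n
  have hR : 0 < ∏ i, ‖1 - w i‖ := (pow_pos hL 2).trans_le hlow
  refine ⟨abs_pos.1 (hdet ▸ mul_pos (pow_pos (prod_pos hlam) k) hR), ?_⟩
  rw [hdet, rpow_neg_half_pow_mul_mul_rpow_half (prod_pos hlam) hR.le, zpow_neg, zpow_natCast]
  exact abs_inv_sqrt_sub_one_le hL hlow hup

/-- Estimate comparing the Guillarmou–Naud weight `|det(I - P^k)|^{-1/2}` of
the `k`-th iterate of a closed geodesic of length `ℓ` with the
Sinai–Bowen–Ruelle weight `(Π_{i<n} |λ_i|)^{-k/2}`: if the complex eigenvalues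
(roots of the characteristic polynomial, with multiplicity) of the real
`2n × 2n` Poincaré map `P` are enumerated with the first `n` of modulus
`≥ e^{aℓ}` and the last `n` of modulus `≤ e^{-aℓ}`, then for every `k ≥ 1`,
`det(I - P^k) ≠ 0` and the multiplicative error is at most
`(1 - e^{-akℓ})^{-n} - 1`. -/
theorem det_one_sub_poincare_iterate_SBR_weight
    (n : ℕ) (hn : 1 ≤ n) (P : Matrix (Fin (2 * n)) (Fin (2 * n)) ℝ)
    (a ℓ : ℝ) (ha : 0 < a) (hℓ : 0 < ℓ) (lam : Fin (2 * n) → ℂ)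
    (hroots : (P.charpoly.map (algebraMap ℝ ℂ)).roots =
      Finset.univ.val.map lam)
    (hexp : ∀ i : Fin (2 * n), (i : ℕ) < n → Real.exp (a * ℓ) ≤ ‖lam i‖)
    (hcon : ∀ i : Fin (2 * n), n ≤ (i : ℕ) → ‖lam i‖ ≤ Real.exp (-(a * ℓ))) :
    ∀ k : ℕ, 1 ≤ k →
      (1 - P ^ k).det ≠ 0 ∧
      |(|(1 - P ^ k).det| ^ (-(1 / 2 : ℝ)) *
          (∏ i ∈ Finset.univ.filter (fun i : Fin (2 * n) => (i : ℕ) < n),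
            ‖lam i‖) ^ ((k : ℝ) / 2) - 1)| ≤
        (1 - Real.exp (-(a * (k : ℝ) * ℓ))) ^ (-(n : ℤ)) - 1 :=
  det_one_sub_poincare_iterate_SBR_weight_general n P a ℓ ha hℓ lam hroots hexp hcon
end
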